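/- arXiv:1104.2380 — 2 statements merged into one kernel-verified Lean document; each statement's English description precedes it below -/
import Mathlib

section
/- Let g⁻¹(x) = exp(exp(x^{1/4})) for x ≥ 0 (extended by g⁻¹(x)=e for x < 0 if needed). For every p ∈ (0,1), the sum Σ_{k=1}^∞ g⁻¹(k)·(1-p)^k is O(g⁻¹(p^{-2})); that is, there is an absolute constant C such that Σ_{k=1}^∞ g⁻¹(k)(1-p)^k ≤ C · g⁻¹(1/p²) for all p ∈ (0,1). -/
/-!
Bound each term by `(1 - p)^k ≤ e^{-pk}` and spend half of that decay on summing a geometric series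
with ratio `e^{-p/2}`, which costs a factor `2/p`. It then suffices that
`ginv t · e^{-pt/2} ≤ K p · ginv (p⁻²)` for all `t ≥ 1`. For `p` bounded away from `0` the AM-GM
inequality `e √t ≤ pt/2 + e²/(2p)` suffices. For small `p` even `p² · ginv (p⁻²)` is a bound: in
the coordinates `s = log t` and `w = (log p⁻²)^{1/4}` this reads `e^{s^{1/4}} + w⁴ ≤ e^w + e^{s - w⁴/2}/2`. If
`s^{1/4} ≤ 15w/16` the term `e^w` absorbs the left side; otherwise `s ≥ 3w⁴/4`, so `s - w⁴/2` is
linear both in `s` and in `w⁴` and the last term absorbs everything.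
-/

open Real

/-- `ginv` is the inverse of `g(x) = exp((log log x)^4)`, namely
`ginv x = exp(exp((log x)^{1/4}))`. -/
noncomputable def ginv (x : ℝ) : ℝ := Real.exp (Real.exp ((Real.log x) ^ ((1 : ℝ) / 4)))

lemma rpow_quarter_le {x : ℝ} (hx : 0 ≤ x) : x ^ ((1 : ℝ) / 4) ≤ 3 / 4 + x / 4 := by
  have h := rpow_one_add_le_one_add_mul_self (s := x - 1) (by linarith) (p := 1 / 4)
    (by norm_num) (by norm_num)
  rw [add_sub_cancel] at h
  linarith

lemma rpow_quarter_pow_four {x : ℝ} (hx : 0 ≤ x) : (x ^ ((1 : ℝ) / 4)) ^ 4 = x := by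
  rw [one_div]; exact rpow_inv_natCast_pow hx (by norm_num)

lemma one_sub_pow_le_exp_neg_mul {p : ℝ} (hp : p ≤ 1) (n : ℕ) :
    (1 - p) ^ n ≤ exp (-(p * n)) :=
  calc (1 - p) ^ n ≤ exp (-p) ^ n := pow_le_pow_left₀ (by linarith) (one_sub_le_exp_neg p) n
    _ = exp (-(p * n)) := by rw [← exp_nat_mul]; ring_nf

lemma summable_and_tsum_le_of_le_exp_neg {f : ℕ → ℝ} {B x : ℝ} (hx : 0 < x)
    (hf0 : ∀ k, 0 ≤ f k) (hf : ∀ k : ℕ, f k ≤ B * exp (-(x * (k + 1)))) :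
    Summable f ∧ ∑' k, f k ≤ B / x := by
  set r := exp (-x)
  have hr0 : 0 < r := exp_pos _
  have hr1 : r < 1 := exp_lt_one_iff.2 (by linarith)
  have hB : 0 ≤ B := nonneg_of_mul_nonneg_left ((hf0 0).trans (hf 0)) (exp_pos _)
  have hterm : ∀ k : ℕ, B * exp (-(x * (k + 1))) = B * r * r ^ k := fun k => by
    rw [← exp_nat_mul, mul_assoc, ← exp_add]; ring_nf
  have hgeom : HasSum (fun k : ℕ => B * exp (-(x * (k + 1)))) (B * r * (1 - r)⁻¹) := by
    simpa only [hterm] using (hasSum_geometric_of_lt_one hr0.le hr1).mul_left (B * r)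
  have hsummable := Summable.of_nonneg_of_le hf0 hf hgeom.summable
  -- `r / (1 - r) = 1 / (e^x - 1) ≤ 1 / x`
  have hratio : r / (1 - r) ≤ 1 / x := by
    have h1 : r * exp x = 1 := by rw [← exp_add, neg_add_cancel, exp_zero]
    rw [div_le_div_iff₀ (by linarith) hx]
    nlinarith [add_one_le_exp x]
  refine ⟨hsummable, ?_⟩
  calc ∑' k, f k ≤ B * r * (1 - r)⁻¹ :=
        hgeom.tsum_eq ▸ hsummable.tsum_le_tsum hf hgeom.summable
    _ = B * (r / (1 - r)) := by ring
    _ ≤ B * (1 / x) := mul_le_mul_of_nonneg_left hratio hB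
    _ = B / x := by ring

lemma one_le_ginv (x : ℝ) : 1 ≤ ginv x := one_le_exp (exp_nonneg _)

lemma ginv_mul_exp_neg_le_exp_div {p t : ℝ} (hp : 0 < p) (ht : 1 ≤ t) :
    ginv t * exp (-(p * t / 2)) ≤ exp (exp 1 ^ 2 / (2 * p)) := by
  have hlog : 0 ≤ log t := log_nonneg ht
  set y := exp (log t / 2)
  have hy : y ^ 2 = t := by rw [← exp_nat_mul]; ring_nf; exact exp_log (by linarith)
  have hroot : exp (log t ^ ((1 : ℝ) / 4)) ≤ exp 1 * y := by
    rw [← exp_add]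
    exact exp_le_exp.2 (by linarith [rpow_quarter_le hlog])
  have hamgm : exp 1 * y ≤ p * t / 2 + exp 1 ^ 2 / (2 * p) := by
    rw [← hy, ← sub_nonneg]
    have : p * y ^ 2 / 2 + exp 1 ^ 2 / (2 * p) - exp 1 * y = (p * y - exp 1) ^ 2 / (2 * p) := by
      field_simp; ring
    rw [this]; positivity
  rw [ginv, ← exp_add]
  exact exp_le_exp.2 (by linarith)

lemma exp_mul_add_pow_four_le {w : ℝ} (hw : 240 ≤ w) : exp (15 / 16 * w) + w ^ 4 ≤ exp w := by
  have hsplit : exp w = exp (15 / 16 * w) * exp (w / 16) := by rw [← exp_add]; ring_nf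
  have hhalf : 2 * exp (15 / 16 * w) ≤ exp w := by
    rw [hsplit]
    nlinarith [add_one_le_exp (w / 16), exp_pos (15 / 16 * w)]
  have hpow : w ^ 5 / 120 ≤ exp w := by
    simpa [Nat.factorial] using pow_div_factorial_le_exp (x := w) (by linarith) 5
  nlinarith [pow_nonneg (by linarith : (0 : ℝ) ≤ w) 4]

lemma exp_rpow_quarter_le {s : ℝ} (hs : 45 ≤ s) : exp (s ^ ((1 : ℝ) / 4)) ≤ exp (s / 3) / 4 := by
  have hsplit : exp (s / 3) = exp (3 / 4 + s / 4) * exp (s / 12 - 3 / 4) := by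
    rw [← exp_add]; ring_nf
  have h4 : 4 ≤ exp (s / 12 - 3 / 4) := by linarith [add_one_le_exp (s / 12 - 3 / 4)]
  calc exp (s ^ ((1 : ℝ) / 4)) ≤ exp (3 / 4 + s / 4) :=
        exp_le_exp.2 (by linarith [rpow_quarter_le (by linarith : 0 ≤ s)])
    _ ≤ exp (s / 3) / 4 := by rw [hsplit]; nlinarith [exp_pos (3 / 4 + s / 4)]

lemma le_exp_div_four {x : ℝ} (hx : 128 ≤ x) : x ≤ exp (x / 4) / 4 := by
  have h := pow_div_factorial_le_exp (x := x / 4) (by linarith) 2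
  norm_num [Nat.factorial] at h
  nlinarith

lemma exp_rpow_quarter_add_pow_four_le {s w : ℝ} (hs : 0 ≤ s) (hw : 256 ≤ w) :
    exp (s ^ ((1 : ℝ) / 4)) + w ^ 4 ≤ exp w + exp (s - w ^ 4 / 2) / 2 := by
  have hpos := exp_pos (s - w ^ 4 / 2)
  rcases le_or_gt (s ^ ((1 : ℝ) / 4)) (15 / 16 * w) with hsmall | hlarge
  · linarith [exp_le_exp.2 hsmall, exp_mul_add_pow_four_le (by linarith : 240 ≤ w)]
  · have hw4 : 256 ^ 4 ≤ w ^ 4 := pow_le_pow_left₀ (by norm_num) hw 4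
    have hsw : 3 / 4 * w ^ 4 ≤ s := by -- as `(15 / 16) ^ 4 ≥ 3 / 4`
      have := pow_le_pow_left₀ (by linarith) hlarge.le 4
      rw [rpow_quarter_pow_four hs] at this
      nlinarith
    have h1 : exp (s ^ ((1 : ℝ) / 4)) ≤ exp (s - w ^ 4 / 2) / 4 :=
      (exp_rpow_quarter_le (by linarith)).trans (by gcongr; linarith)
    have h2 : w ^ 4 ≤ exp (s - w ^ 4 / 2) / 4 :=
      (le_exp_div_four (by linarith)).trans (by gcongr; linarith)
    linarith [exp_pos w]

lemma ginv_mul_exp_neg_le_sq_mul_ginv {p t : ℝ} (hp : 0 < p) (hp₀ : p ≤ exp (-2 ^ 31))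
    (ht : 1 ≤ t) :
    ginv t * exp (-(p * t / 2)) ≤ p ^ 2 * ginv (1 / p ^ 2) := by
  have hL : log (1 / p ^ 2) = -2 * log p := by
    rw [one_div, log_inv, log_pow]; push_cast; ring
  have hlogp : log p ≤ -2 ^ 31 := (log_le_iff_le_exp hp).2 hp₀
  set w := log (1 / p ^ 2) ^ ((1 : ℝ) / 4)
  have hw4 : w ^ 4 = -2 * log p := by rw [rpow_quarter_pow_four (by rw [hL]; linarith), hL]
  have hw : 256 ≤ w :=
    (pow_le_pow_iff_left₀ (by norm_num) (rpow_nonneg (by rw [hL]; linarith) _) four_ne_zero).1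
      (by rw [hw4]; linarith)
  have hp2 : p ^ 2 = exp (-w ^ 4) := by
    rw [← exp_log (pow_pos hp 2), log_pow, hw4]; push_cast; ring_nf
  have hpt : p * t = exp (log t - w ^ 4 / 2) := by
    rw [hw4, show log t - -2 * log p / 2 = log t + log p by ring, exp_add, exp_log (by linarith),
      exp_log hp, mul_comm]
  have hcore := exp_rpow_quarter_add_pow_four_le (log_nonneg ht) hw
  change exp (exp (log t ^ ((1 : ℝ) / 4))) * exp (-(p * t / 2)) ≤ p ^ 2 * exp (exp w)
  rw [hpt, hp2, ← exp_add, ← exp_add]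
  exact exp_le_exp.2 (by linarith)

lemma exists_ginv_mul_exp_neg_le : ∃ K : ℝ, 0 < K ∧ ∀ p t : ℝ, 0 < p → p < 1 → 1 ≤ t →
    ginv t * exp (-(p * t / 2)) ≤ K * p * ginv (1 / p ^ 2) := by
  set p₀ := exp (-2 ^ 31 : ℝ)
  have hp₀ : 0 < p₀ := exp_pos _
  have hp₀1 : p₀ ≤ 1 := exp_le_one_iff.2 (by norm_num)
  set K := exp (exp 1 ^ 2 / (2 * p₀)) / p₀
  have hK : 1 ≤ K := by
    rw [le_div_iff₀ hp₀]
    linarith [one_le_exp (x := exp 1 ^ 2 / (2 * p₀)) (by positivity)]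
  refine ⟨K, by linarith, fun p t hp hp1 ht => ?_⟩
  have hg := one_le_ginv (1 / p ^ 2)
  rcases le_or_gt p p₀ with hsmall | hlarge
  · calc ginv t * exp (-(p * t / 2)) ≤ p ^ 2 * ginv (1 / p ^ 2) :=
          ginv_mul_exp_neg_le_sq_mul_ginv hp hsmall ht
      _ ≤ K * p * ginv (1 / p ^ 2) := by gcongr; nlinarith
  · calc ginv t * exp (-(p * t / 2)) ≤ exp (exp 1 ^ 2 / (2 * p)) :=
          ginv_mul_exp_neg_le_exp_div hp ht
      _ ≤ exp (exp 1 ^ 2 / (2 * p₀)) := by gcongr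
      _ = K * p₀ := (div_mul_cancel₀ _ hp₀.ne').symm
      _ ≤ K * p := by gcongr
      _ ≤ K * p * ginv (1 / p ^ 2) := le_mul_of_one_le_right (by positivity) hg

/-- The geometric-weighted sum `Σ_{k≥1} ginv(k)·(1-p)^k` is `O(ginv(p⁻²))`,
uniformly over `p ∈ (0,1)`. -/
theorem geometric_sum_ginv_bound :
    ∃ C : ℝ, 0 < C ∧ ∀ p : ℝ, 0 < p → p < 1 →
      (Summable fun k : ℕ => ginv ((k : ℝ) + 1) * (1 - p) ^ (k + 1)) ∧
      (∑' k : ℕ, ginv ((k : ℝ) + 1) * (1 - p) ^ (k + 1)) ≤ C * ginv (1 / p ^ 2) := by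
  obtain ⟨K, hK, hbound⟩ := exists_ginv_mul_exp_neg_le
  refine ⟨2 * K, by positivity, fun p hp hp1 => ?_⟩
  have hterm : ∀ k : ℕ, ginv ((k : ℝ) + 1) * (1 - p) ^ (k + 1) ≤
      K * p * ginv (1 / p ^ 2) * exp (-(p / 2 * (k + 1))) := fun k => by
    have ht : (1 : ℝ) ≤ k + 1 := by linarith [k.cast_nonneg (α := ℝ)]
    have hpow := one_sub_pow_le_exp_neg_mul hp1.le (k + 1)
    push_cast at hpow
    calc ginv ((k : ℝ) + 1) * (1 - p) ^ (k + 1)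
        ≤ ginv ((k : ℝ) + 1) * exp (-(p * (k + 1))) := by
          gcongr; exact zero_le_one.trans (one_le_ginv _)
      _ = ginv ((k : ℝ) + 1) * exp (-(p * (k + 1) / 2)) * exp (-(p / 2 * (k + 1))) := by
          rw [mul_assoc, ← exp_add]; ring_nf
      _ ≤ _ := mul_le_mul_of_nonneg_right (hbound p _ hp hp1 ht) (exp_pos _).le
  obtain ⟨hsum, hle⟩ := summable_and_tsum_le_of_le_exp_neg (half_pos hp)
    (fun k => mul_nonneg (zero_le_one.trans (one_le_ginv _)) (pow_nonneg (by linarith) _)) hterm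
  exact ⟨hsum, hle.trans_eq (by field_simp)⟩
end

section
/- Let Q : Ω' × Ω' → [0,1] be the transition matrix on pairs (σ,a) (σ an independent set of G, a ∈ {0,1}^n) defined so that for x=(σ,a) ≠ x'=(σ',a') with Q_{xx'}>0, Q_{xx'} = 2^{-n} · Π_{i∈σ\σ'} (1/W_i) · Π_{i∈σ∩σ'} (1 - 1/W_i). Then Q satisfies detailed balance with respect to the distribution π̂ with π̂_{(σ,a)} ∝ Π_{i∈σ} W_i: for all x ≠ x' with Q_{xx'} > 0, π̂_x Q_{xx'} = π̂_{x'} Q_{x'x}. -/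
open Finset

lemma aux_detailed_balance {V : Type*} [DecidableEq V] (W : V → ℝ)
    (hW : ∀ i, W i ≠ 0) (s t : Finset V) :
    (∏ i ∈ s, W i) * ((∏ i ∈ s \ t, (W i)⁻¹) * ∏ i ∈ s ∩ t, (1 - (W i)⁻¹))
      = ∏ i ∈ s ∩ t, (W i - 1) := by
  have h1 : ∏ i ∈ s, W i = (∏ i ∈ s \ t, W i) * ∏ i ∈ s ∩ t, W i := by
    rw [← Finset.prod_union (Finset.disjoint_sdiff_inter s t),
      Finset.sdiff_union_inter]
  rw [h1]
  have h2 : (∏ i ∈ s \ t, W i) * ∏ i ∈ s \ t, (W i)⁻¹ = 1 := by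
    rw [← Finset.prod_mul_distrib]
    exact Finset.prod_eq_one fun i _ => mul_inv_cancel₀ (hW i)
  have h3 : (∏ i ∈ s ∩ t, W i) * ∏ i ∈ s ∩ t, (1 - (W i)⁻¹)
      = ∏ i ∈ s ∩ t, (W i - 1) := by
    rw [← Finset.prod_mul_distrib]
    refine Finset.prod_congr rfl fun i _ => ?_
    rw [mul_sub, mul_one, mul_inv_cancel₀ (hW i)]
  calc (∏ i ∈ s \ t, W i) * (∏ i ∈ s ∩ t, W i) *
        ((∏ i ∈ s \ t, (W i)⁻¹) * ∏ i ∈ s ∩ t, (1 - (W i)⁻¹))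
      = ((∏ i ∈ s \ t, W i) * ∏ i ∈ s \ t, (W i)⁻¹) *
        ((∏ i ∈ s ∩ t, W i) * ∏ i ∈ s ∩ t, (1 - (W i)⁻¹)) := by ring
    _ = ∏ i ∈ s ∩ t, (W i - 1) := by rw [h2, h3, one_mul]

/-- Detailed balance for the comparison chain `Q` on pairs `(σ, a)` of an
independent set `σ` of a graph on `n` vertices and an attempt vector `a`:
if all off-diagonal positive transition probabilities have the product form
`Q_{xx'} = 2⁻ⁿ Π_{i∈σ\σ'} W_i⁻¹ Π_{i∈σ∩σ'} (1 - W_i⁻¹)`, then `Q` is in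
detailed balance with `π̂_{(σ,a)} = Π_{i∈σ} W_i`. -/
theorem comparison_chain_detailed_balance {V : Type*} [Fintype V] [DecidableEq V]
    (G : SimpleGraph V) (n : ℕ) (hn : Fintype.card V = n)
    (W : V → ℝ) (hW : ∀ i, 1 ≤ W i)
    (Ω' : Finset (Finset V × (V → Bool)))
    (hind : ∀ x ∈ Ω', ∀ i ∈ x.1, ∀ j ∈ x.1, ¬ G.Adj i j)
    (Q : (Finset V × (V → Bool)) → (Finset V × (V → Bool)) → ℝ)
    (hfeas : ∀ x x', 0 < Q x x' ↔ 0 < Q x' x)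
    (hQ : ∀ x ∈ Ω', ∀ x' ∈ Ω', x ≠ x' → 0 < Q x x' →
      Q x x' = (2 : ℝ) ^ (-(n : ℤ)) * (∏ i ∈ x.1 \ x'.1, (W i)⁻¹)
        * ∏ i ∈ x.1 ∩ x'.1, (1 - (W i)⁻¹))
    (πhat : (Finset V × (V → Bool)) → ℝ)
    (hπhat : ∀ x, πhat x = ∏ i ∈ x.1, W i) :
    ∀ x ∈ Ω', ∀ x' ∈ Ω', x ≠ x' → 0 < Q x x' →
      πhat x * Q x x' = πhat x' * Q x' x := by
  intro x hx x' hx' hne hpos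
  have hpos' : 0 < Q x' x := (hfeas x x').mp hpos
  have hW0 : ∀ i, W i ≠ 0 := fun i => by linarith [hW i]
  rw [hQ x hx x' hx' hne hpos, hQ x' hx' x hx hne.symm hpos', hπhat, hπhat]
  have e1 := aux_detailed_balance W hW0 x.1 x'.1
  have e2 := aux_detailed_balance W hW0 x'.1 x.1
  calc (∏ i ∈ x.1, W i) * ((2:ℝ) ^ (-(n:ℤ)) * (∏ i ∈ x.1 \ x'.1, (W i)⁻¹)
        * ∏ i ∈ x.1 ∩ x'.1, (1 - (W i)⁻¹))
      = (2:ℝ) ^ (-(n:ℤ)) * ((∏ i ∈ x.1, W i) *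
        ((∏ i ∈ x.1 \ x'.1, (W i)⁻¹) * ∏ i ∈ x.1 ∩ x'.1, (1 - (W i)⁻¹))) := by ring
    _ = (2:ℝ) ^ (-(n:ℤ)) * ∏ i ∈ x.1 ∩ x'.1, (W i - 1) := by rw [e1]
    _ = (2:ℝ) ^ (-(n:ℤ)) * ∏ i ∈ x'.1 ∩ x.1, (W i - 1) := by rw [Finset.inter_comm]
    _ = (2:ℝ) ^ (-(n:ℤ)) * ((∏ i ∈ x'.1, W i) *
        ((∏ i ∈ x'.1 \ x.1, (W i)⁻¹) * ∏ i ∈ x'.1 ∩ x.1, (1 - (W i)⁻¹))) := by rw [e2]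
    _ = (∏ i ∈ x'.1, W i) * ((2:ℝ) ^ (-(n:ℤ)) * (∏ i ∈ x'.1 \ x.1, (W i)⁻¹)
        * ∏ i ∈ x'.1 ∩ x.1, (1 - (W i)⁻¹)) := by ring
end
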